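/- arXiv:1108.4607 — 2 statements merged into one kernel-verified Lean document; each statement's English description precedes it below -/
import Mathlib

section
/- For every natural number n ≥ 2 there exist quantum predicates M and N on ℂⁿ (Hermitian n×n complex matrices with 0 ⊑ M ⊑ I and 0 ⊑ N ⊑ I in the Löwner order) and an n×n complex matrix E with E† E ⊑ I, such that M N = N M while, writing wp(M) = E M E† and wp(N) = E N E†, one has wp(M)·wp(N) ≠ wp(N)·wp(M). -/
/-!
Take for `M` and `N` the projections onto `e₀` and `e₁`. For a Kraus operator `E` with columns
`u = E e₀` and `v = E e₁` one has `wp(M) = u uᴴ` and `wp(N) = v vᴴ`, so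
`wp(M) wp(N) = ⟪u, v⟫ u vᴴ`, which differs from `wp(N) wp(M) = ⟪v, u⟫ v uᴴ` as soon as `u` and `v`
are neither orthogonal nor parallel. A `2 × 2` contraction with this property is written down
explicitly and carried to `ℂⁿ` by conjugation with the isometry `ℂ² → ℂⁿ`, which preserves
projections, products, contractions and non-commutation.
-/

open Matrix ComplexOrder

/-- The Löwner order: `A ⊑ B` iff `B - A` is positive semidefinite. -/
def Loewner {n : ℕ} (A B : Matrix (Fin n) (Fin n) ℂ) : Prop :=
  (B - A).PosSemidef

namespace Matrix

variable {m n 𝕜 : Type*} [Fintype m] [RCLike 𝕜]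

theorem IsHermitian.posSemidef_of_mul_self [Fintype n] {P : Matrix n n 𝕜} (hP : P.IsHermitian)
    (hPP : P * P = P) : P.PosSemidef := by
  simpa only [hP.eq, hPP] using posSemidef_conjTranspose_mul_self P

theorem IsHermitian.posSemidef_one_sub_of_mul_self [Fintype n] [DecidableEq n]
    {P : Matrix n n 𝕜} (hP : P.IsHermitian) (hPP : P * P = P) : (1 - P).PosSemidef := by
  refine (isHermitian_one.sub hP).posSemidef_of_mul_self ?_
  simp only [sub_mul, mul_sub, hPP, one_mul, mul_one, sub_self, sub_zero]

theorem exists_conjTranspose_mul_self_eq_one {k l : ℕ} (h : k ≤ l) :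
    ∃ V : Matrix (Fin l) (Fin k) 𝕜, Vᴴ * V = 1 :=
  ⟨(1 : Matrix (Fin l) (Fin l) 𝕜).submatrix id (Fin.castLE h), by
    rw [conjTranspose_submatrix, conjTranspose_one, ← submatrix_mul _ _ _ _ _ Function.bijective_id,
      mul_one, submatrix_one _ (Fin.castLE_injective h)]⟩

section Isometry

variable {V : Matrix n m 𝕜}

theorem conjTranspose_mul_mul_conjTranspose (A : Matrix m m 𝕜) :
    (V * A * Vᴴ)ᴴ = V * Aᴴ * Vᴴ := by
  rw [conjTranspose_mul, conjTranspose_mul, conjTranspose_conjTranspose, Matrix.mul_assoc]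

variable [Fintype n] [DecidableEq m]

theorem mul_mul_conjTranspose_mul_mul_conjTranspose (hV : Vᴴ * V = 1) (A B : Matrix m m 𝕜) :
    V * A * Vᴴ * (V * B * Vᴴ) = V * (A * B) * Vᴴ := by
  simp only [Matrix.mul_assoc, ← Matrix.mul_assoc Vᴴ V, hV, Matrix.one_mul]

theorem mul_mul_conjTranspose_injective (hV : Vᴴ * V = 1) :
    Function.Injective fun A : Matrix m m 𝕜 => V * A * Vᴴ := by
  intro A B h
  simpa only [Matrix.mul_assoc, ← Matrix.mul_assoc Vᴴ V, hV, Matrix.one_mul, Matrix.mul_one]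
    using congrArg (fun X => Vᴴ * X * V) h

theorem PosSemidef.one_sub_mul_mul_conjTranspose [DecidableEq n] (hV : Vᴴ * V = 1)
    {A : Matrix m m 𝕜} (hA : (1 - A).PosSemidef) : (1 - V * A * Vᴴ).PosSemidef := by
  have hsplit : 1 - V * A * Vᴴ = V * (1 - A) * Vᴴ + (1 - V * Vᴴ) := by
    rw [Matrix.mul_sub, Matrix.sub_mul, Matrix.mul_one]; abel
  have hproj : V * Vᴴ * (V * Vᴴ) = V * Vᴴ := by
    rw [Matrix.mul_assoc, ← Matrix.mul_assoc Vᴴ, hV, Matrix.one_mul]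
  rw [hsplit]
  exact (hA.mul_mul_conjTranspose_same V).add
    ((isHermitian_mul_conjTranspose_self V).posSemidef_one_sub_of_mul_self hproj)

theorem wp_mul_mul_conjTranspose (hV : Vᴴ * V = 1) (E M : Matrix m m 𝕜) :
    V * E * Vᴴ * (V * M * Vᴴ) * (V * E * Vᴴ)ᴴ = V * (E * M * Eᴴ) * Vᴴ := by
  rw [conjTranspose_mul_mul_conjTranspose, mul_mul_conjTranspose_mul_mul_conjTranspose hV,
    mul_mul_conjTranspose_mul_mul_conjTranspose hV]

end Isometry

end Matrix

theorem exists_projections_wp_not_commute_fin_two : ∃ M N E : Matrix (Fin 2) (Fin 2) ℂ,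
    M.IsHermitian ∧ M * M = M ∧ N.IsHermitian ∧ N * N = N ∧ (1 - Eᴴ * E).PosSemidef ∧
      M * N = N * M ∧ E * M * Eᴴ * (E * N * Eᴴ) ≠ E * N * Eᴴ * (E * M * Eᴴ) := by
  let E : Matrix (Fin 2) (Fin 2) ℂ := !![3/5, 16/25; 0, 3/5]
  -- `E` stacked over `B` has orthonormal columns `(3/5, 0, 4/5)` and `(16/25, 3/5, -12/25)`.
  let B : Matrix (Fin 1) (Fin 2) ℂ := !![4/5, -12/25]
  have hE : 1 - Eᴴ * E = Bᴴ * B := by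
    ext i j; fin_cases i <;> fin_cases j <;>
      norm_num [E, B, mul_apply, Fin.sum_univ_two, conjTranspose_apply, Complex.conj_ofNat]
  have hEM : E * !![1, 0; 0, 0] * Eᴴ = !![9/25, 0; 0, 0] := by
    ext i j; fin_cases i <;> fin_cases j <;>
      norm_num [E, mul_apply, Fin.sum_univ_two, conjTranspose_apply, Complex.conj_ofNat]
  have hEN : E * !![0, 0; 0, 1] * Eᴴ = !![256/625, 48/125; 48/125, 9/25] := by
    ext i j; fin_cases i <;> fin_cases j <;>
      norm_num [E, mul_apply, Fin.sum_univ_two, conjTranspose_apply, Complex.conj_ofNat]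
  refine ⟨!![1, 0; 0, 0], !![0, 0; 0, 1], E, ?_, ?_, ?_, ?_,
    hE ▸ posSemidef_conjTranspose_mul_self B, ?_, ?_⟩
  · ext i j; fin_cases i <;> fin_cases j <;> simp
  · rw [mul_fin_two]; simp
  · ext i j; fin_cases i <;> fin_cases j <;> simp
  · rw [mul_fin_two]; simp
  · rw [mul_fin_two, mul_fin_two]; simp
  · rw [hEM, hEN, mul_fin_two, mul_fin_two]; simp

theorem exists_wp_not_commute_of_commute
    (n : ℕ) (hn : 2 ≤ n) :
    ∃ (M N E : Matrix (Fin n) (Fin n) ℂ),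
      M.IsHermitian ∧ Loewner 0 M ∧ Loewner M 1 ∧
      N.IsHermitian ∧ Loewner 0 N ∧ Loewner N 1 ∧
      Loewner (Eᴴ * E) 1 ∧
      M * N = N * M ∧
      (E * M * Eᴴ) * (E * N * Eᴴ) ≠ (E * N * Eᴴ) * (E * M * Eᴴ) := by
  obtain ⟨M, N, E, hM, hMM, hN, hNN, hE, hMN, hwp⟩ := exists_projections_wp_not_commute_fin_two
  obtain ⟨V, hV⟩ := exists_conjTranspose_mul_self_eq_one (𝕜 := ℂ) hn
  have hM' := isHermitian_mul_mul_conjTranspose V hM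
  have hN' := isHermitian_mul_mul_conjTranspose V hN
  have hMM' : V * M * Vᴴ * (V * M * Vᴴ) = V * M * Vᴴ := by
    rw [mul_mul_conjTranspose_mul_mul_conjTranspose hV, hMM]
  have hNN' : V * N * Vᴴ * (V * N * Vᴴ) = V * N * Vᴴ := by
    rw [mul_mul_conjTranspose_mul_mul_conjTranspose hV, hNN]
  have hE' : (1 - (V * E * Vᴴ)ᴴ * (V * E * Vᴴ)).PosSemidef := by
    rw [conjTranspose_mul_mul_conjTranspose, mul_mul_conjTranspose_mul_mul_conjTranspose hV]
    exact hE.one_sub_mul_mul_conjTranspose hV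
  simp only [Loewner, sub_zero]
  refine ⟨V * M * Vᴴ, V * N * Vᴴ, V * E * Vᴴ, hM', hM'.posSemidef_of_mul_self hMM',
    hM'.posSemidef_one_sub_of_mul_self hMM', hN', hN'.posSemidef_of_mul_self hNN',
    hN'.posSemidef_one_sub_of_mul_self hNN', hE', ?_, ?_⟩
  · simp only [mul_mul_conjTranspose_mul_mul_conjTranspose hV, hMN]
  · rw [wp_mul_mul_conjTranspose hV, wp_mul_mul_conjTranspose hV,
      mul_mul_conjTranspose_mul_mul_conjTranspose hV, mul_mul_conjTranspose_mul_mul_conjTranspose hV]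
    exact (mul_mul_conjTranspose_injective hV).ne hwp
end

section
/- Consider the 2×2 complex matrices M = [[0.2, 0], [0, 0]], N = [[0.3, 0], [0, 0.7]], and E = [[0.5, 0.2i], [0, 0.5]] (where i = √−1). Then: M and N are quantum predicates (Hermitian with 0 ⊑ M ⊑ I and 0 ⊑ N ⊑ I in the Löwner order), E† E ⊑ I, M N = N M, and nevertheless (E M E†)·(E N E†) ≠ (E N E†)·(E M E†). -/
/-!
`M` and `N` are diagonal with entries in `[0, 1]`, so they commute and are quantum predicates.
`I - E† E` is the nonnegative diagonal matrix `diag(1/2, 67/100)` plus the rank-one matrix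
`v v†` with `v = (1/2, i/5)`, hence positive semidefinite. Finally `E M E† = diag(1/20, 0)` has
distinct diagonal entries, so only diagonal matrices commute with it, while `E N E†` has the
off-diagonal entry `7i/100`.
-/

open Matrix ComplexOrder

theorem Matrix.apply_eq_zero_of_commute_diagonal {n R : Type*} [Fintype n] [DecidableEq n]
    [CommRing R] [NoZeroDivisors R] {d : n → R} {A : Matrix n n R}
    (h : Commute (diagonal d) A) {i j : n} (hij : d i ≠ d j) : A i j = 0 := by
  have hentry : d i * A i j = A i j * d j := by
    simpa only [diagonal_mul, mul_diagonal] using congrFun (congrFun h.eq i) j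
  have hsub : (d i - d j) * A i j = 0 := by rw [sub_mul, hentry, mul_comm, sub_self]
  exact (mul_eq_zero.mp hsub).resolve_left (sub_ne_zero.mpr hij)

theorem loewner_diagonal_iff {n : ℕ} {d e : Fin n → ℂ} :
    Loewner (diagonal d) (diagonal e) ↔ d ≤ e := by
  simp [Loewner, diagonal_sub, sub_nonneg, Pi.le_def]

theorem isQuantumPredicate_diagonal {n : ℕ} {d : Fin n → ℂ} (h0 : 0 ≤ d) (h1 : d ≤ 1) :
    (diagonal d).IsHermitian ∧ Loewner 0 (diagonal d) ∧ Loewner (diagonal d) 1 := by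
  have hpos : Loewner 0 (diagonal d) := by rwa [← diagonal_zero, loewner_diagonal_iff]
  refine ⟨?_, hpos, by rwa [← diagonal_one, loewner_diagonal_iff]⟩
  simpa [Loewner] using hpos.isHermitian

theorem loewner_of_sub_eq_diagonal_add_vecMulVec {n : ℕ} {A B : Matrix (Fin n) (Fin n) ℂ}
    {d v : Fin n → ℂ} (hd : 0 ≤ d) (h : B - A = diagonal d + vecMulVec v (star v)) :
    Loewner A B := by
  rw [Loewner, h]
  exact (posSemidef_diagonal_iff.mpr hd).add (posSemidef_vecMulVec_self_star v)

theorem example_commute_but_wp_not_commute :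
    let M : Matrix (Fin 2) (Fin 2) ℂ := !![0.2, 0; 0, 0]
    let N : Matrix (Fin 2) (Fin 2) ℂ := !![0.3, 0; 0, 0.7]
    let E : Matrix (Fin 2) (Fin 2) ℂ := !![0.5, 0.2 * Complex.I; 0, 0.5]
    M.IsHermitian ∧ Loewner 0 M ∧ Loewner M 1 ∧
    N.IsHermitian ∧ Loewner 0 N ∧ Loewner N 1 ∧
    Loewner (Eᴴ * E) 1 ∧
    M * N = N * M ∧
    (E * M * Eᴴ) * (E * N * Eᴴ) ≠ (E * N * Eᴴ) * (E * M * Eᴴ) := by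
  intro M N E
  have hM : M = diagonal ![0.2, 0] := by rw [diagonal_fin_two]; rfl
  have hN : N = diagonal ![0.3, 0.7] := by rw [diagonal_fin_two]; rfl
  obtain ⟨hMh, hM0, hM1⟩ : M.IsHermitian ∧ Loewner 0 M ∧ Loewner M 1 := by
    rw [hM]
    apply isQuantumPredicate_diagonal <;> norm_num [Pi.le_def, Fin.forall_fin_two, Complex.le_def]
  obtain ⟨hNh, hN0, hN1⟩ : N.IsHermitian ∧ Loewner 0 N ∧ Loewner N 1 := by
    rw [hN]
    apply isQuantumPredicate_diagonal <;> norm_num [Pi.le_def, Fin.forall_fin_two, Complex.le_def]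
  have hE : Loewner (Eᴴ * E) 1 := by
    refine loewner_of_sub_eq_diagonal_add_vecMulVec (d := ![1/2, 67/100])
      (v := ![1/2, Complex.I/5]) ?_ ?_
    · norm_num [Pi.le_def, Fin.forall_fin_two, Complex.le_def]
    · ext i j
      fin_cases i <;> fin_cases j <;>
        simp [E, mul_apply, Fin.sum_univ_two, vecMulVec_apply, one_apply, -cons_vecMulVec,
          -vecMulVec_cons] <;> norm_num [Complex.ext_iff]
  have hwpM : E * M * Eᴴ = diagonal ![1/20, 0] := by
    ext i j
    fin_cases i <;> fin_cases j <;> simp [E, M, mul_apply, Fin.sum_univ_two, Complex.ext_iff]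
    norm_num
  have hwpN : (E * N * Eᴴ) 0 1 = 7/100 * Complex.I := by
    simp [E, N, mul_apply, Fin.sum_univ_two, Complex.ext_iff]; norm_num
  refine ⟨hMh, hM0, hM1, hNh, hN0, hN1, hE, by rw [hM, hN]; exact (commute_diagonal _ _).eq, ?_⟩
  intro hcomm
  rw [hwpM] at hcomm
  have hzero : (E * N * Eᴴ) 0 1 = 0 :=
    apply_eq_zero_of_commute_diagonal hcomm (by norm_num)
  rw [hwpN] at hzero
  norm_num at hzero
end
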